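/- Let X be a boundary pair and let R′ be any subset of R_X containing f_X. Let χ be the set of boundary pairs X′ = (R_{X′}, s_{X′}, B_{X′}, B′_{X′}) such that R_{X′} = R′, s_{X′} = s_X, B_{X′} agrees with B_X on the boundary edges common to R′ and R_X, and B′_{X′} agrees with B′_X on those common boundary edges. Then μ(X) ≤ max_{X′ ∈ χ} μ(X′). -/
import Mathlib


namespace PottsBP

/-- Vertices of the integer lattice ℤ². -/
abbrev V : Type := ℤ × ℤ

/-- Lattice adjacency on ℤ². -/
def Adj (x y : V) : Prop := (x.1 - y.1).natAbs + (x.2 - y.2).natAbs = 1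

/-- `(u, v)` is a boundary edge of `R`, oriented with `u` outside `R` and `v` inside. -/
def IsBdryEdge (R : Finset V) (u v : V) : Prop := u ∉ R ∧ v ∈ R ∧ Adj u v

/-- Configurations on region `R` with spins `{1,…,q}`, extended by `0` off `R`. -/
def Configs (q : ℕ) (R : Finset V) : Set (V → ℕ) :=
  {σ | (∀ v ∈ R, 1 ≤ σ v ∧ σ v ≤ q) ∧ ∀ v ∉ R, σ v = 0}

/-- A boundary pair: a nonempty finite region `R`, a distinguished boundary edge
`s = (w, f)` with `f ∈ R`, and a pair `(B, B')` of boundary configurations (maps from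
boundary edges, represented by their (outside, inside) endpoint pairs, to `{0,…,q}`,
with `0` denoting a free edge) that differ only on `s`, assign spins from `{1,…,q}`
to `s`, and such that any two perpendicular boundary edges sharing their outside
endpoint get the same spin in at least one of `B`, `B'`. -/
structure BoundaryPair (q : ℕ) where
  R : Finset V
  w : V
  f : V
  hw : w ∉ R
  hf : f ∈ R
  hadj : Adj w f
  B : V × V → ℕ
  B' : V × V → ℕ
  hBrange : ∀ u v, IsBdryEdge R u v → B (u, v) ≤ q
  hB'range : ∀ u v, IsBdryEdge R u v → B' (u, v) ≤ q
  hagree : ∀ u v, IsBdryEdge R u v → (u, v) ≠ (w, f) → B (u, v) = B' (u, v)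
  hBs : 1 ≤ B (w, f) ∧ B (w, f) ≤ q
  hB's : 1 ≤ B' (w, f) ∧ B' (w, f) ≤ q
  hperp : ∀ u v₁ v₂, IsBdryEdge R u v₁ → IsBdryEdge R u v₂ →
    (v₁.1 - u.1) * (v₂.1 - u.1) + (v₁.2 - u.2) * (v₂.2 - u.2) = 0 →
    B (u, v₁) = B (u, v₂) ∨ B' (u, v₁) = B' (u, v₂)

variable {q : ℕ}

/-- The number of monochromatic internal edges of `R` under `σ`. -/
noncomputable def monInt (R : Finset V) (σ : V → ℕ) : ℕ :=
  Set.ncard {e : Sym2 V | ∃ x y : V, e = s(x, y) ∧ Adj x y ∧ x ∈ R ∧ y ∈ R ∧ σ x = σ y}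

/-- `mon_σ(E(R_X) − {s_X})` for the boundary pair `X`: the number of monochromatic
edges, excluding the distinguished edge `s_X`, where a boundary edge is monochromatic
if its spin under `B_X` is in `{1,…,q}` and equals the spin `σ` gives its inner
endpoint. -/
noncomputable def monExS (X : BoundaryPair q) (σ : V → ℕ) : ℕ :=
  monInt X.R σ + Set.ncard {p : V × V | IsBdryEdge X.R p.1 p.2 ∧ p ≠ (X.w, X.f) ∧
    1 ≤ X.B p ∧ X.B p = σ p.2}

/-- `mon_σ(E(R_X))` with respect to an arbitrary boundary configuration `Bc`. -/
noncomputable def monFull (X : BoundaryPair q) (Bc : V × V → ℕ) (σ : V → ℕ) : ℕ :=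
  monInt X.R σ + Set.ncard {p : V × V | IsBdryEdge X.R p.1 p.2 ∧
    1 ≤ Bc p ∧ Bc p = σ p.2}

/-- `c_i`: the total weight (ignoring the edge `s_X`) of the configurations that
assign spin `i` to `f_X`. -/
noncomputable def ci (X : BoundaryPair q) (lam : ℝ) (i : ℕ) : ℝ :=
  ∑ᶠ σ ∈ {σ ∈ Configs q X.R | σ X.f = i}, lam ^ monExS X σ

/-- `c = Σ_{i ∉ C} c_i` where `C = {B_X(s_X), B'_X(s_X)}`. -/
noncomputable def cOut (X : BoundaryPair q) (lam : ℝ) : ℝ :=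
  ∑ i ∈ (Finset.Icc 1 q).filter
      (fun i => i ≠ X.B (X.w, X.f) ∧ i ≠ X.B' (X.w, X.f)), ci X lam i

/-- `μ(X) = max_{i ∈ C} (1−λ)c_i / ((1+λ)c_i + c)`. -/
noncomputable def mu (X : BoundaryPair q) (lam : ℝ) : ℝ :=
  max ((1 - lam) * ci X lam (X.B (X.w, X.f)) /
        ((1 + lam) * ci X lam (X.B (X.w, X.f)) + cOut X lam))
      ((1 - lam) * ci X lam (X.B' (X.w, X.f)) /
        ((1 + lam) * ci X lam (X.B' (X.w, X.f)) + cOut X lam))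

/-- The partition function of `X` with boundary configuration `Bc`. -/
noncomputable def Zbp (X : BoundaryPair q) (lam : ℝ) (Bc : V × V → ℕ) : ℝ :=
  ∑ᶠ σ ∈ Configs q X.R, lam ^ monFull X Bc σ

/-- The Gibbs distribution `π_{Bc}` on configurations of `R_X`. -/
noncomputable def gibbsbp (X : BoundaryPair q) (lam : ℝ) (Bc : V × V → ℕ)
    (σ : V → ℕ) : ℝ :=
  lam ^ monFull X Bc σ / Zbp X lam Bc

/-- `ψ` is a coupling of `π_{B_X}` and `π_{B'_X}`. -/
def IsCoupling (X : BoundaryPair q) (lam : ℝ)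
    (ψ : (V → ℕ) × (V → ℕ) → ℝ) : Prop :=
  (∀ p, 0 ≤ ψ p) ∧
  (∀ p : (V → ℕ) × (V → ℕ),
    (p.1 ∉ Configs q X.R ∨ p.2 ∉ Configs q X.R) → ψ p = 0) ∧
  (∀ σ ∈ Configs q X.R, (∑ᶠ σ' ∈ Configs q X.R, ψ (σ, σ')) = gibbsbp X lam X.B σ) ∧
  (∀ σ' ∈ Configs q X.R, (∑ᶠ σ ∈ Configs q X.R, ψ (σ, σ')) = gibbsbp X lam X.B' σ')

/-- The probability that a pair drawn from `ψ` disagrees at `f_X`. -/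
noncomputable def disagree (X : BoundaryPair q)
    (ψ : (V → ℕ) × (V → ℕ) → ℝ) : ℝ :=
  ∑ᶠ p ∈ {p : (V → ℕ) × (V → ℕ) | p.1 X.f ≠ p.2 X.f}, ψ p

/-- `ν(X)`: the minimum, over couplings `ψ` of `π_{B_X}` and `π_{B'_X}`, of the
probability that a pair drawn from `ψ` disagrees at `f_X`. -/
noncomputable def nu (X : BoundaryPair q) (lam : ℝ) : ℝ :=
  sInf {r : ℝ | ∃ ψ, IsCoupling X lam ψ ∧ r = disagree X ψ}

lemma adj_cases {u v : V} (h : Adj u v) :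
    u = (v.1 + 1, v.2) ∨ u = (v.1 - 1, v.2) ∨ u = (v.1, v.2 + 1) ∨ u = (v.1, v.2 - 1) := by
  unfold Adj at h
  rcases u with ⟨a, b⟩; rcases v with ⟨c, d⟩
  simp only [Prod.mk.injEq]
  omega

lemma monIntSet_finite (R : Finset V) (P : V → V → Prop) :
    {e : Sym2 V | ∃ x y : V, e = s(x, y) ∧ Adj x y ∧ x ∈ R ∧ y ∈ R ∧ P x y}.Finite := by
  apply Set.Finite.subset (Set.Finite.image (fun p : V × V => s(p.1, p.2)) (R ×ˢ R).finite_toSet)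
  rintro e ⟨x, y, rfl, _, hx, hy, _⟩
  exact ⟨(x, y), by simp [hx, hy], rfl⟩

lemma bdrySet_finite (R : Finset V) (P : V × V → Prop) :
    {p : V × V | IsBdryEdge R p.1 p.2 ∧ P p}.Finite := by
  have h : {p : V × V | IsBdryEdge R p.1 p.2 ∧ P p} ⊆
      ((fun v : V => ((v.1 + 1, v.2), v)) '' R) ∪ ((fun v : V => ((v.1 - 1, v.2), v)) '' R)
      ∪ ((fun v : V => ((v.1, v.2 + 1), v)) '' R) ∪ ((fun v : V => ((v.1, v.2 - 1), v)) '' R) := by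
    rintro ⟨u, v⟩ ⟨⟨hu, hv, hadj⟩, -⟩
    simp only [Set.mem_union, Set.mem_image, Finset.mem_coe]
    rcases adj_cases hadj with h | h | h | h
    · exact Or.inl (Or.inl (Or.inl ⟨v, hv, by simp [← h]⟩))
    · exact Or.inl (Or.inl (Or.inr ⟨v, hv, by simp [← h]⟩))
    · exact Or.inl (Or.inr ⟨v, hv, by simp [← h]⟩)
    · exact Or.inr ⟨v, hv, by simp [← h]⟩
  exact (((R.finite_toSet.image _).union (R.finite_toSet.image _)).union
    ((R.finite_toSet.image _).union (R.finite_toSet.image _))).subset (by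
      intro x hx; have := h hx
      simp only [Set.mem_union] at this ⊢
      tauto)

lemma configs_finite (q : ℕ) (R : Finset V) : (Configs q R).Finite := by
  have hs : Configs q R ⊆ Set.range (fun g : (R → Fin (q + 1)) => fun v : V =>
      if h : v ∈ R then (g ⟨v, h⟩ : ℕ) else 0) := by
    rintro σ ⟨h1, h2⟩
    refine ⟨fun v => ⟨σ v, Nat.lt_succ_of_le (h1 v v.2).2⟩, ?_⟩
    funext v; by_cases h : v ∈ R <;> simp [h, h2 v]

  exact (Set.finite_range _).subset hs


open Finset in
noncomputable def cfg (q : ℕ) (R : Finset V) : Finset (V → ℕ) :=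
  (configs_finite q R).toFinset

lemma mem_cfg {q : ℕ} {R : Finset V} {σ : V → ℕ} : σ ∈ cfg q R ↔ σ ∈ Configs q R :=
  Set.Finite.mem_toFinset _

/-- combine a configuration on `R'` with one outside. -/
def comb (R' : Finset V) (σ' τ : V → ℕ) : V → ℕ := fun v => if v ∈ R' then σ' v else τ v

variable {q : ℕ}

lemma const_mem_configs {R : Finset V} {i : ℕ} (h1 : 1 ≤ i) (h2 : i ≤ q) :
    (fun v => if v ∈ R then i else 0) ∈ Configs q R := by
  constructor
  · intro v hv; simp [hv, h1, h2]
  · intro v hv; simp [hv]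

lemma finsum_sep_eq_sum (S : Set (V → ℕ)) (hS : S.Finite) (P : (V → ℕ) → Prop)
    [DecidablePred P] (F : (V → ℕ) → ℝ) :
    ∑ᶠ σ ∈ {σ ∈ S | P σ}, F σ = ∑ σ ∈ hS.toFinset.filter P, F σ := by
  rw [finsum_mem_eq_finite_toFinset_sum _ (hS.subset (fun σ hσ => hσ.1))]
  apply Finset.sum_congr _ (fun _ _ => rfl)
  ext σ
  simp [Set.Finite.mem_toFinset, Set.mem_setOf_eq]

lemma ci_eq_sum (X : BoundaryPair q) (lam : ℝ) (i : ℕ) :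
    ci X lam i = ∑ σ ∈ (cfg q X.R).filter (fun σ => σ X.f = i), lam ^ monExS X σ :=
  finsum_sep_eq_sum _ _ _ _

lemma ci_pos (X : BoundaryPair q) {lam : ℝ} (hlam : 0 < lam) {i : ℕ}
    (h1 : 1 ≤ i) (h2 : i ≤ q) : 0 < ci X lam i := by
  rw [ci_eq_sum]
  apply Finset.sum_pos (fun σ _ => pow_pos hlam _)
  refine ⟨fun v => if v ∈ X.R then i else 0, ?_⟩
  simp only [Finset.mem_filter, mem_cfg]
  exact ⟨const_mem_configs h1 h2, by simp [X.hf]⟩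

lemma ci_nonneg (X : BoundaryPair q) {lam : ℝ} (hlam : 0 ≤ lam) (i : ℕ) :
    0 ≤ ci X lam i := by
  rw [ci_eq_sum]
  exact Finset.sum_nonneg fun σ _ => pow_nonneg hlam _

lemma cOut_nonneg (X : BoundaryPair q) {lam : ℝ} (hlam : 0 ≤ lam) :
    0 ≤ cOut X lam :=
  Finset.sum_nonneg fun i _ => ci_nonneg X hlam i

/-- splitting a sum over configurations on `X.R` as a double sum. -/
lemma sum_configs_split (R' RR : Finset V) (hsub : R' ⊆ RR) (f : V) (hf : f ∈ R')
    (F : (V → ℕ) → ℝ) (i : ℕ) :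
    ∑ σ ∈ (cfg q RR).filter (fun σ => σ f = i), F σ
      = ∑ τ ∈ cfg q (RR \ R'), ∑ σ' ∈ (cfg q R').filter (fun σ' => σ' f = i),
          F (comb R' σ' τ) := by
  rw [← Finset.sum_product']
  refine Finset.sum_nbij'
    (i := fun σ => (fun v => if v ∈ RR \ R' then σ v else 0,
                    fun v => if v ∈ R' then σ v else 0))
    (j := fun p => comb R' p.2 p.1) ?_ ?_ ?_ ?_ ?_
  · rintro σ hσ
    simp only [Finset.mem_filter, mem_cfg] at hσ
    obtain ⟨⟨h1, h2⟩, hfi⟩ := hσ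
    simp only [Finset.mem_product, Finset.mem_filter, mem_cfg]
    refine ⟨⟨?_, ?_⟩, ⟨⟨?_, ?_⟩, by simp [hf, hfi]⟩⟩
    · intro v hv; simp only [hv, if_pos]; exact h1 v (Finset.mem_sdiff.mp hv).1
    · intro v hv; simp [hv]
    · intro v hv; simp only [hv, if_pos]; exact h1 v (hsub hv)
    · intro v hv; simp [hv]
  · rintro ⟨τ, σ'⟩ hp
    simp only [Finset.mem_product, Finset.mem_filter, mem_cfg] at hp
    obtain ⟨⟨ht1, ht2⟩, ⟨hs1, hs2⟩, hfi⟩ := hp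
    simp only [Finset.mem_filter, mem_cfg]
    refine ⟨⟨?_, ?_⟩, ?_⟩
    · intro v hv
      by_cases h : v ∈ R'
      · simpa [comb, h] using hs1 v h
      · have : v ∈ RR \ R' := Finset.mem_sdiff.mpr ⟨hv, h⟩
        simpa [comb, h] using ht1 v this
    · intro v hv
      have h' : v ∉ R' := fun h => hv (hsub h)
      have : v ∉ RR \ R' := fun h => hv (Finset.mem_sdiff.mp h).1
      simp [comb, h', ht2 v this]
    · simp [comb, hf, hfi]
  · intro σ hσ
    simp only [Finset.mem_filter, mem_cfg] at hσ
    obtain ⟨⟨h1, h2⟩, hfi⟩ := hσ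
    funext v
    by_cases h : v ∈ R'
    · simp [comb, h]
    · by_cases h' : v ∈ RR \ R'
      · simp [comb, h, h']
      · have : v ∉ RR := by
          intro hv; exact h' (Finset.mem_sdiff.mpr ⟨hv, h⟩)
        simp [comb, h, h', h2 v this]
  · rintro ⟨τ, σ'⟩ hp
    simp only [Finset.mem_product, Finset.mem_filter, mem_cfg] at hp
    obtain ⟨⟨ht1, ht2⟩, ⟨hs1, hs2⟩, hfi⟩ := hp
    have e1 : (fun v => if v ∈ RR \ R' then comb R' σ' τ v else 0) = τ := by
      funext v
      by_cases h : v ∈ RR \ R'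
      · have := (Finset.mem_sdiff.mp h).2
        simp [comb, h, this]
      · simp [h, (ht2 v h).symm]
    have e2 : (fun v => if v ∈ R' then comb R' σ' τ v else 0) = σ' := by
      funext v
      by_cases h : v ∈ R'
      · simp [comb, h]
      · simp [h, (hs2 v h).symm]
    simp only [Prod.mk.injEq]; exact ⟨e1, e2⟩
  · intro σ hσ
    simp only [Finset.mem_filter, mem_cfg] at hσ
    obtain ⟨⟨h1, h2⟩, hfi⟩ := hσ
    congr 1
    funext v
    by_cases h : v ∈ R'
    · simp [comb, h]
    · by_cases h' : v ∈ RR \ R'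
      · simp [comb, h, h']
      · have : v ∉ RR := by
          intro hv; exact h' (Finset.mem_sdiff.mpr ⟨hv, h⟩)
        simp [comb, h, h', h2 v this]

/-- The boundary pair on `R'` induced by `X` and an outside configuration `τ`. -/
def extPair (X : BoundaryPair q) (R' : Finset V) (hsub : R' ⊆ X.R) (hfR' : X.f ∈ R')
    (τ : V → ℕ) : BoundaryPair q where
  R := R'
  w := X.w
  f := X.f
  hw := fun h => X.hw (hsub h)
  hf := hfR'
  hadj := X.hadj
  B := fun p => if p.1 ∈ X.R then min (τ p.1) q else X.B p
  B' := fun p => if p.1 ∈ X.R then min (τ p.1) q else X.B' p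
  hBrange := by
    intro u v ⟨hu, hv, hadj⟩
    by_cases h : u ∈ X.R
    · simp [h, Nat.min_le_right]
    · simpa [h] using X.hBrange u v ⟨h, hsub hv, hadj⟩
  hB'range := by
    intro u v ⟨hu, hv, hadj⟩
    by_cases h : u ∈ X.R
    · simp [h, Nat.min_le_right]
    · simpa [h] using X.hB'range u v ⟨h, hsub hv, hadj⟩
  hagree := by
    intro u v ⟨hu, hv, hadj⟩ hne
    by_cases h : u ∈ X.R
    · simp [h]
    · simpa [h] using X.hagree u v ⟨h, hsub hv, hadj⟩ hne
  hBs := by simpa [X.hw] using X.hBs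
  hB's := by simpa [X.hw] using X.hB's
  hperp := by
    intro u v₁ v₂ ⟨hu1, hv1, ha1⟩ ⟨hu2, hv2, ha2⟩ hperp
    by_cases h : u ∈ X.R
    · left; simp [h]
    · simpa [h] using X.hperp u v₁ v₂ ⟨h, hsub hv1, ha1⟩ ⟨h, hsub hv2, ha2⟩ hperp

lemma adj_symm {x y : V} (h : Adj x y) : Adj y x := by
  unfold Adj at *; omega

lemma monInt_congr (R : Finset V) {σ σ' : V → ℕ} (h : ∀ v ∈ R, σ v = σ' v) :
    monInt R σ = monInt R σ' := by
  unfold monInt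
  congr 1
  ext e
  constructor <;> rintro ⟨x, y, rfl, ha, hx, hy, he⟩ <;> refine ⟨x, y, rfl, ha, hx, hy, ?_⟩
  · rw [← h x hx, ← h y hy]; exact he
  · rw [h x hx, h y hy]; exact he

lemma monInt_split (RR R' : Finset V) (hsub : R' ⊆ RR) (σ : V → ℕ) :
    monInt RR σ = monInt R' σ + monInt (RR \ R') σ +
      Set.ncard {p : V × V | p.1 ∈ RR ∧ p.1 ∉ R' ∧ p.2 ∈ R' ∧ Adj p.1 p.2 ∧ σ p.1 = σ p.2} := by
  classical
  set M1 := {e : Sym2 V | ∃ x y : V, e = s(x, y) ∧ Adj x y ∧ x ∈ R' ∧ y ∈ R' ∧ σ x = σ y}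
  set M2 := {e : Sym2 V | ∃ x y : V, e = s(x, y) ∧ Adj x y ∧ x ∈ RR \ R' ∧ y ∈ RR \ R' ∧ σ x = σ y}
  set M3 := {e : Sym2 V | ∃ x y : V, e = s(x, y) ∧ Adj x y ∧ x ∈ RR ∧ y ∈ RR ∧
      (x ∉ R' ∧ y ∈ R' ∧ σ x = σ y)}
  set P := {p : V × V | p.1 ∈ RR ∧ p.1 ∉ R' ∧ p.2 ∈ R' ∧ Adj p.1 p.2 ∧ σ p.1 = σ p.2}
  have hM1 : M1.Finite := monIntSet_finite R' _
  have hM2 : M2.Finite := monIntSet_finite (RR \ R') _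
  have hM3 : M3.Finite := monIntSet_finite RR _
  have hunion : {e : Sym2 V | ∃ x y : V, e = s(x, y) ∧ Adj x y ∧ x ∈ RR ∧ y ∈ RR ∧ σ x = σ y}
      = M1 ∪ (M2 ∪ M3) := by
    ext e
    constructor
    · rintro ⟨x, y, rfl, ha, hx, hy, he⟩
      by_cases hx' : x ∈ R' <;> by_cases hy' : y ∈ R'
      · exact Or.inl ⟨x, y, rfl, ha, hx', hy', he⟩
      · exact Or.inr (Or.inr ⟨y, x, Sym2.eq_swap.symm, adj_symm ha, hy, hx, hy', hx', he.symm⟩)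
      · exact Or.inr (Or.inr ⟨x, y, rfl, ha, hx, hy, hx', hy', he⟩)
      · exact Or.inr (Or.inl ⟨x, y, rfl, ha, Finset.mem_sdiff.mpr ⟨hx, hx'⟩,
          Finset.mem_sdiff.mpr ⟨hy, hy'⟩, he⟩)
    · rintro (⟨x, y, rfl, ha, hx, hy, he⟩ | ⟨x, y, rfl, ha, hx, hy, he⟩ |
        ⟨x, y, rfl, ha, hx, hy, _, _, he⟩)
      · exact ⟨x, y, rfl, ha, hsub hx, hsub hy, he⟩
      · exact ⟨x, y, rfl, ha, (Finset.mem_sdiff.mp hx).1, (Finset.mem_sdiff.mp hy).1, he⟩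
      · exact ⟨x, y, rfl, ha, hx, hy, he⟩
  have hd23 : Disjoint M2 M3 := by
    rw [Set.disjoint_left]
    rintro e ⟨x, y, rfl, -, hx, hy, -⟩ ⟨x', y', heq, -, -, -, -, hy', -⟩
    rcases (Sym2.eq_iff.mp heq) with ⟨h1, h2⟩ | ⟨h1, h2⟩
    · exact (Finset.mem_sdiff.mp hy).2 (by rw [h2]; exact hy')
    · exact (Finset.mem_sdiff.mp hx).2 (by rw [h1]; exact hy')
  have hd123 : Disjoint M1 (M2 ∪ M3) := by
    rw [Set.disjoint_left]
    rintro e ⟨x, y, rfl, -, hx, hy, -⟩ (⟨x', y', heq, -, hx', hy', -⟩ | ⟨x', y', heq, -, -, -, hx', -, -⟩)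
    · rcases (Sym2.eq_iff.mp heq) with ⟨h1, h2⟩ | ⟨h1, h2⟩
      · exact (Finset.mem_sdiff.mp hx').2 (by rw [← h1]; exact hx)
      · exact (Finset.mem_sdiff.mp hx').2 (by rw [← h2]; exact hy)
    · rcases (Sym2.eq_iff.mp heq) with ⟨h1, h2⟩ | ⟨h1, h2⟩
      · exact hx' (by rw [← h1]; exact hx)
      · exact hx' (by rw [← h2]; exact hy)
  have himg : M3 = (fun p : V × V => s(p.1, p.2)) '' P := by
    ext e
    constructor
    · rintro ⟨x, y, rfl, ha, hx, -, hx', hy', he⟩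
      exact ⟨(x, y), ⟨hx, hx', hy', ha, he⟩, rfl⟩
    · rintro ⟨⟨x, y⟩, ⟨hx, hx', hy', ha, he⟩, rfl⟩
      exact ⟨x, y, rfl, ha, hx, hsub hy', hx', hy', he⟩
  have hinj : Set.InjOn (fun p : V × V => s(p.1, p.2)) P := by
    rintro ⟨x, y⟩ ⟨-, hx', hy', -, -⟩ ⟨x2, y2⟩ ⟨-, hx2', hy2', -, -⟩ heq
    simp only at heq
    rcases (Sym2.eq_iff.mp heq) with ⟨h1, h2⟩ | ⟨h1, h2⟩
    · rw [h1, h2]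
    · exact absurd (by rw [h1]; exact hy2' : x ∈ R') hx'
  have hM3card : M3.ncard = P.ncard := by
    rw [himg, Set.ncard_image_of_injOn hinj]
  unfold monInt
  rw [hunion, Set.ncard_union_eq hd123 hM1 (hM2.union hM3),
    Set.ncard_union_eq hd23 hM2 hM3, hM3card]
  ring

/-- weight contribution of the outside configuration. -/
noncomputable def wOut (X : BoundaryPair q) (R' : Finset V) (τ : V → ℕ) : ℕ :=
  monInt (X.R \ R') τ +
  Set.ncard {p : V × V | IsBdryEdge X.R p.1 p.2 ∧ (p.2 ∉ R' ∧ 1 ≤ X.B p ∧ X.B p = τ p.2)}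

lemma monExS_comb (X : BoundaryPair q) (R' : Finset V) (hsub : R' ⊆ X.R)
    (hfR' : X.f ∈ R') {τ σ' : V → ℕ} (hτ : τ ∈ Configs q (X.R \ R'))
    (hσ' : σ' ∈ Configs q R') :
    monExS X (comb R' σ' τ) = monExS (extPair X R' hsub hfR' τ) σ' + wOut X R' τ := by
  classical
  set σ := comb R' σ' τ with hσdef
  set Y := extPair X R' hsub hfR' τ with hY
  -- pieces
  set CrossP := {p : V × V | p.1 ∈ X.R ∧ p.1 ∉ R' ∧ p.2 ∈ R' ∧ Adj p.1 p.2 ∧ τ p.1 = σ' p.2}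
    with hCrossP
  set BR2 := {p : V × V | IsBdryEdge X.R p.1 p.2 ∧
      (p.2 ∈ R' ∧ p ≠ (X.w, X.f) ∧ 1 ≤ X.B p ∧ X.B p = σ' p.2)} with hBR2
  set BS := {p : V × V | IsBdryEdge X.R p.1 p.2 ∧ (p.2 ∉ R' ∧ 1 ≤ X.B p ∧ X.B p = τ p.2)}
    with hBS
  have hCrossFin : CrossP.Finite := by
    apply (bdrySet_finite R' (fun _ => True)).subset
    rintro ⟨u, v⟩ ⟨h1, h2, h3, h4, h5⟩
    exact ⟨⟨h2, h3, h4⟩, trivial⟩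
  have hBR2Fin : BR2.Finite := bdrySet_finite X.R _
  have hBSFin : BS.Finite := bdrySet_finite X.R _
  -- values of comb
  have hcombR : ∀ v ∈ R', σ v = σ' v := fun v hv => by simp [hσdef, comb, hv]
  have hcombS : ∀ v ∈ X.R \ R', σ v = τ v := fun v hv => by
    simp [hσdef, comb, (Finset.mem_sdiff.mp hv).2]
  -- step 1 : split monInt
  have hmonInt : monInt X.R σ = monInt R' σ' + monInt (X.R \ R') τ + CrossP.ncard := by
    rw [monInt_split X.R R' hsub σ, monInt_congr R' hcombR, monInt_congr (X.R \ R') hcombS]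
    congr 2
    ext ⟨u, v⟩
    simp only [hCrossP, Set.mem_setOf_eq]
    constructor
    · rintro ⟨h1, h2, h3, h4, h5⟩
      refine ⟨h1, h2, h3, h4, ?_⟩
      rw [← hcombS u (Finset.mem_sdiff.mpr ⟨h1, h2⟩), ← hcombR v h3]; exact h5
    · rintro ⟨h1, h2, h3, h4, h5⟩
      refine ⟨h1, h2, h3, h4, ?_⟩
      rw [hcombS u (Finset.mem_sdiff.mpr ⟨h1, h2⟩), hcombR v h3]; exact h5
  -- step 2 : split the boundary term of X
  have hbdrysplit : {p : V × V | IsBdryEdge X.R p.1 p.2 ∧ p ≠ (X.w, X.f) ∧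
      1 ≤ X.B p ∧ X.B p = σ p.2} = BR2 ∪ BS := by
    ext ⟨u, v⟩
    simp only [Set.mem_setOf_eq, Set.mem_union, hBR2, hBS]
    constructor
    · rintro ⟨h1, h2, h3, h4⟩
      by_cases hv : v ∈ R'
      · exact Or.inl ⟨h1, hv, h2, h3, by rw [← hcombR v hv]; exact h4⟩
      · refine Or.inr ⟨h1, hv, h3, ?_⟩
        rw [← hcombS v (Finset.mem_sdiff.mpr ⟨h1.2.1, hv⟩)]; exact h4
    · rintro (⟨h1, hv, h2, h3, h4⟩ | ⟨h1, hv, h3, h4⟩)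
      · exact ⟨h1, h2, h3, by rw [hcombR v hv]; exact h4⟩
      · refine ⟨h1, fun hc => hv ?_, h3,
          by rw [hcombS v (Finset.mem_sdiff.mpr ⟨h1.2.1, hv⟩)]; exact h4⟩
        rw [show v = X.f from congrArg Prod.snd hc]
        exact hfR'
  have hbdrydisj : Disjoint BR2 BS := by
    rw [Set.disjoint_left]
    rintro ⟨u, v⟩ ⟨-, hv, -⟩ ⟨-, hv', -⟩
    exact hv' hv
  -- step 3 : the boundary term of Y
  have hYbdry : {p : V × V | IsBdryEdge Y.R p.1 p.2 ∧ p ≠ (Y.w, Y.f) ∧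
      1 ≤ Y.B p ∧ Y.B p = σ' p.2} = CrossP ∪ BR2 := by
    ext ⟨u, v⟩
    have hYR : Y.R = R' := rfl
    have hYw : Y.w = X.w := rfl
    have hYf : Y.f = X.f := rfl
    have hYB : ∀ p : V × V, Y.B p = if p.1 ∈ X.R then min (τ p.1) q else X.B p :=
      fun p => rfl
    simp only [Set.mem_setOf_eq, Set.mem_union, hCrossP, hBR2, hYR, hYw, hYf, hYB]
    constructor
    · rintro ⟨⟨hu, hv, hadj⟩, hne, h3, h4⟩
      by_cases h : u ∈ X.R
      · have huS : u ∈ X.R \ R' := Finset.mem_sdiff.mpr ⟨h, hu⟩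
        have hle : τ u ≤ q := (hτ.1 u huS).2
        rw [if_pos h, min_eq_left hle] at h4
        exact Or.inl ⟨h, hu, hv, hadj, h4⟩
      · rw [if_neg h] at h3 h4
        exact Or.inr ⟨⟨h, hsub hv, hadj⟩, hv, hne, h3, h4⟩
    · rintro (⟨h, hu, hv, hadj, h4⟩ | ⟨⟨hu, hv, hadj⟩, hvR, hne, h3, h4⟩)
      · have huS : u ∈ X.R \ R' := Finset.mem_sdiff.mpr ⟨h, hu⟩
        have h1 : 1 ≤ τ u := (hτ.1 u huS).1
        have hle : τ u ≤ q := (hτ.1 u huS).2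
        refine ⟨⟨hu, hv, hadj⟩, ?_, ?_, ?_⟩
        · intro hc
          have : u = X.w := congrArg Prod.fst hc
          exact X.hw (this ▸ h)
        · rw [if_pos h, min_eq_left hle]; exact h1
        · rw [if_pos h, min_eq_left hle]; exact h4
      · refine ⟨⟨fun hc => hu (hsub hc), hvR, hadj⟩, hne, ?_, ?_⟩
        · rw [if_neg hu]; exact h3
        · rw [if_neg hu]; exact h4
  have hYdisj : Disjoint CrossP BR2 := by
    rw [Set.disjoint_left]
    rintro ⟨u, v⟩ ⟨h, -⟩ ⟨⟨hu, -⟩, -⟩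
    exact hu h
  -- assemble
  unfold monExS wOut
  rw [hbdrysplit, Set.ncard_union_eq hbdrydisj hBR2Fin hBSFin, hmonInt,
    hYbdry, Set.ncard_union_eq hYdisj hCrossFin hBR2Fin,
    show monInt Y.R σ' = monInt R' σ' from rfl, ← hBS]
  ring

lemma ci_decomp (X : BoundaryPair q) (R' : Finset V) (hsub : R' ⊆ X.R) (hfR' : X.f ∈ R')
    (lam : ℝ) (i : ℕ) :
    ci X lam i = ∑ τ ∈ cfg q (X.R \ R'),
      lam ^ wOut X R' τ * ci (extPair X R' hsub hfR' τ) lam i := by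
  rw [ci_eq_sum, sum_configs_split R' X.R hsub X.f hfR' (fun σ => lam ^ monExS X σ) i]
  apply Finset.sum_congr rfl
  intro τ hτ
  rw [ci_eq_sum, Finset.mul_sum]
  have hset : (cfg q (extPair X R' hsub hfR' τ).R).filter
      (fun σ' => σ' (extPair X R' hsub hfR' τ).f = i)
      = (cfg q R').filter (fun σ' => σ' X.f = i) := rfl
  rw [hset]
  apply Finset.sum_congr rfl
  intro σ' hσ'
  rw [monExS_comb X R' hsub hfR' (mem_cfg.mp hτ)
    (mem_cfg.mp (Finset.mem_filter.mp hσ').1), pow_add]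
  ring

lemma cOut_decomp (X : BoundaryPair q) (R' : Finset V) (hsub : R' ⊆ X.R) (hfR' : X.f ∈ R')
    (lam : ℝ) :
    cOut X lam = ∑ τ ∈ cfg q (X.R \ R'),
      lam ^ wOut X R' τ * cOut (extPair X R' hsub hfR' τ) lam := by
  unfold cOut
  have hB : ∀ τ : V → ℕ, (extPair X R' hsub hfR' τ).B
      ((extPair X R' hsub hfR' τ).w, (extPair X R' hsub hfR' τ).f) = X.B (X.w, X.f) :=
    fun τ => if_neg X.hw
  have hB' : ∀ τ : V → ℕ, (extPair X R' hsub hfR' τ).B'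
      ((extPair X R' hsub hfR' τ).w, (extPair X R' hsub hfR' τ).f) = X.B' (X.w, X.f) :=
    fun τ => if_neg X.hw
  calc ∑ i ∈ (Finset.Icc 1 q).filter
          (fun i => i ≠ X.B (X.w, X.f) ∧ i ≠ X.B' (X.w, X.f)), ci X lam i
      = ∑ i ∈ (Finset.Icc 1 q).filter
          (fun i => i ≠ X.B (X.w, X.f) ∧ i ≠ X.B' (X.w, X.f)),
          ∑ τ ∈ cfg q (X.R \ R'), lam ^ wOut X R' τ * ci (extPair X R' hsub hfR' τ) lam i := by
        exact Finset.sum_congr rfl fun i _ => ci_decomp X R' hsub hfR' lam i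
    _ = ∑ τ ∈ cfg q (X.R \ R'), ∑ i ∈ (Finset.Icc 1 q).filter
          (fun i => i ≠ X.B (X.w, X.f) ∧ i ≠ X.B' (X.w, X.f)),
          lam ^ wOut X R' τ * ci (extPair X R' hsub hfR' τ) lam i := Finset.sum_comm
    _ = ∑ τ ∈ cfg q (X.R \ R'), lam ^ wOut X R' τ * ∑ i ∈ (Finset.Icc 1 q).filter
          (fun i => i ≠ (extPair X R' hsub hfR' τ).B
              ((extPair X R' hsub hfR' τ).w, (extPair X R' hsub hfR' τ).f) ∧
            i ≠ (extPair X R' hsub hfR' τ).B'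
              ((extPair X R' hsub hfR' τ).w, (extPair X R' hsub hfR' τ).f)),
          ci (extPair X R' hsub hfR' τ) lam i := by
        refine Finset.sum_congr rfl fun τ _ => ?_
        rw [Finset.mul_sum, hB τ, hB' τ]

lemma branch_le (X : BoundaryPair q) (R' : Finset V) (hsub : R' ⊆ X.R) (hfR' : X.f ∈ R')
    {lam m : ℝ} (hlam0 : 0 < lam) (j : ℕ) (hj1 : 1 ≤ j) (hj2 : j ≤ q)
    (hτm : ∀ τ ∈ cfg q (X.R \ R'),
      (1 - lam) * ci (extPair X R' hsub hfR' τ) lam j ≤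
        m * ((1 + lam) * ci (extPair X R' hsub hfR' τ) lam j +
          cOut (extPair X R' hsub hfR' τ) lam)) :
    (1 - lam) * ci X lam j / ((1 + lam) * ci X lam j + cOut X lam) ≤ m := by
  have hci := ci_pos X hlam0 hj1 hj2
  have hco := cOut_nonneg X hlam0.le
  have hD : 0 < (1 + lam) * ci X lam j + cOut X lam := by nlinarith
  rw [div_le_iff₀ hD]
  rw [ci_decomp X R' hsub hfR' lam j, cOut_decomp X R' hsub hfR' lam]
  calc (1 - lam) * ∑ τ ∈ cfg q (X.R \ R'),
        lam ^ wOut X R' τ * ci (extPair X R' hsub hfR' τ) lam j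
      = ∑ τ ∈ cfg q (X.R \ R'), lam ^ wOut X R' τ *
          ((1 - lam) * ci (extPair X R' hsub hfR' τ) lam j) := by
        rw [Finset.mul_sum]; exact Finset.sum_congr rfl fun τ _ => by ring
    _ ≤ ∑ τ ∈ cfg q (X.R \ R'), lam ^ wOut X R' τ *
          (m * ((1 + lam) * ci (extPair X R' hsub hfR' τ) lam j +
            cOut (extPair X R' hsub hfR' τ) lam)) := by
        refine Finset.sum_le_sum fun τ hτ => ?_
        exact mul_le_mul_of_nonneg_left (hτm τ hτ) (pow_nonneg hlam0.le _)
    _ = m * ((1 + lam) * ∑ τ ∈ cfg q (X.R \ R'),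
            lam ^ wOut X R' τ * ci (extPair X R' hsub hfR' τ) lam j +
          ∑ τ ∈ cfg q (X.R \ R'),
            lam ^ wOut X R' τ * cOut (extPair X R' hsub hfR' τ) lam) := by
        rw [mul_add, Finset.mul_sum, Finset.mul_sum, Finset.mul_sum,
          ← Finset.sum_add_distrib]
        exact Finset.sum_congr rfl fun τ _ => by ring

end PottsBP

open PottsBP in
/-- Let `X` be a boundary pair, let `R′ ⊆ R_X` contain `f_X`, and let `χ` be the set
of boundary pairs `X′` with region `R′`, distinguished edge `s_X`, whose boundary
configurations agree with those of `X` on the boundary edges common to `R′` and `R_X`.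
Then `μ(X) ≤ max_{X′ ∈ χ} μ(X′)`  (formulated as: any upper bound `m` of
`{μ(X′) : X′ ∈ χ}` is an upper bound of `μ(X)`). -/
theorem mu_le_max_mu_of_subregion (q : ℕ) (hq : 2 ≤ q) (lam : ℝ)
    (hlam0 : 0 < lam) (hlam1 : lam ≤ 1)
    (X : BoundaryPair q) (R' : Finset V) (hsub : R' ⊆ X.R) (hfR' : X.f ∈ R')
    (m : ℝ)
    (hm : ∀ X' : BoundaryPair q, X'.R = R' → X'.w = X.w → X'.f = X.f →
      (∀ u v, IsBdryEdge X.R u v → v ∈ R' → X'.B (u, v) = X.B (u, v)) →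
      (∀ u v, IsBdryEdge X.R u v → v ∈ R' → X'.B' (u, v) = X.B' (u, v)) →
      mu X' lam ≤ m) :
    mu X lam ≤ m := by
  have hYB : ∀ τ : V → ℕ, (extPair X R' hsub hfR' τ).B
      ((extPair X R' hsub hfR' τ).w, (extPair X R' hsub hfR' τ).f) = X.B (X.w, X.f) :=
    fun τ => if_neg X.hw
  have hYB' : ∀ τ : V → ℕ, (extPair X R' hsub hfR' τ).B'
      ((extPair X R' hsub hfR' τ).w, (extPair X R' hsub hfR' τ).f) = X.B' (X.w, X.f) :=
    fun τ => if_neg X.hw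
  have key : ∀ τ ∈ cfg q (X.R \ R'), mu (extPair X R' hsub hfR' τ) lam ≤ m := by
    intro τ _
    refine hm (extPair X R' hsub hfR' τ) rfl rfl rfl ?_ ?_
    · rintro u v ⟨hu, -, -⟩ -
      exact if_neg hu
    · rintro u v ⟨hu, -, -⟩ -
      exact if_neg hu
  have main : ∀ j : ℕ, 1 ≤ j → j ≤ q →
      (∀ τ : V → ℕ, (1 - lam) * ci (extPair X R' hsub hfR' τ) lam j /
          ((1 + lam) * ci (extPair X R' hsub hfR' τ) lam j +
            cOut (extPair X R' hsub hfR' τ) lam) ≤ mu (extPair X R' hsub hfR' τ) lam) →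
      (1 - lam) * ci X lam j / ((1 + lam) * ci X lam j + cOut X lam) ≤ m := by
    intro j hj1 hj2 hbr
    apply branch_le X R' hsub hfR' hlam0 j hj1 hj2
    intro τ hτ
    have hciY := ci_pos (extPair X R' hsub hfR' τ) hlam0 hj1 hj2
    have hcoY := cOut_nonneg (extPair X R' hsub hfR' τ) hlam0.le
    have hDτ : 0 < (1 + lam) * ci (extPair X R' hsub hfR' τ) lam j +
        cOut (extPair X R' hsub hfR' τ) lam := by nlinarith
    exact (div_le_iff₀ hDτ).mp (le_trans (hbr τ) (key τ hτ))
  rw [mu]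
  apply max_le
  · refine main _ X.hBs.1 X.hBs.2 fun τ => ?_
    rw [mu, hYB τ]
    exact le_max_left _ _
  · refine main _ X.hB's.1 X.hB's.2 fun τ => ?_
    rw [mu, hYB' τ]
    exact le_max_right _ _
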